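/- arXiv:1502.04551 — 9 statements merged into one kernel-verified Lean document; each statement's English description precedes it below -/
import Mathlib

section
/- If a sequence b of length n is bitonic and y = split(b) (where split compares positions i and n/2+i for i=1..n/2, placing the max at i and min at n/2+i), then left(y) and right(y) are bitonic and every element of left(y) is greater than or equal to every element of right(y). -/
/-!
A cyclic shift of `b` by `r` shifts both halves of its split by `r` as well, so we may assume
that `b` increases up to a peak `i` and decreases afterwards; reflecting `b` reverses both
halves, so we may moreover assume `i ≤ m`. Then `b (p + m) ≤ b p` holds exactly for `p ≥ k`,
for some crossing point `k ≤ i`. Hence the lower half `min (b p) (b (p + m))` increases up to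
`k - 1` and decreases from `k` on, while the upper half decreases up to `k - 1`, is unimodal on
`[k, m]` and stays below its last value on `[1, k - 1]`, so it becomes unimodal after a shift by
`k - 1`. Finally each `min (b q) (b (q + m))` is bounded by one of `b p`, `b (p + m)` lying on
the same monotone branch.
-/

/-- A sequence `x` (with entries at indices `1..n`) is bitonic if some circular
shift of it first increases (up to position `i`) and then decreases. -/
def Bitonic (n : ℕ) (x : ℕ → ℕ) : Prop :=
  ∃ r i, i ≤ n ∧
    (∀ p q, 1 ≤ p → p ≤ q → q ≤ i → x ((p - 1 + r) % n + 1) ≤ x ((q - 1 + r) % n + 1)) ∧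
    (∀ p q, i ≤ p → p ≤ q → q ≤ n → x ((q - 1 + r) % n + 1) ≤ x ((p - 1 + r) % n + 1))

open Set

variable {α : Type*}

def cyclicShift (n r : ℕ) (x : ℕ → α) : ℕ → α := fun p => x ((p - 1 + r) % n + 1)

def reflect (n : ℕ) (x : ℕ → α) : ℕ → α := fun p => x (n + 1 - p)

def IsUnimodal [Preorder α] (n : ℕ) (f : ℕ → α) : Prop :=
  ∃ i ∈ Icc 1 n, MonotoneOn f (Icc 1 i) ∧ AntitoneOn f (Icc i n)

section CyclicShift

variable {n r : ℕ} {x y : ℕ → α}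

theorem cyclicShift_cyclicShift (s : ℕ) :
    cyclicShift n s (cyclicShift n r x) = cyclicShift n (s + r) x := by
  funext p
  simp only [cyclicShift, Nat.add_sub_cancel, Nat.mod_add_mod, Nat.add_assoc]

theorem cyclicShift_congr (hn : 0 < n) (h : EqOn x y (Icc 1 n)) :
    cyclicShift n r x = cyclicShift n r y :=
  funext fun _ => h ⟨Nat.le_add_left 1 _, Nat.mod_lt _ hn⟩

theorem cyclicShift_of_add_le {p : ℕ} (hp : 1 ≤ p) (h : p + r ≤ n) :
    cyclicShift n r x p = x (p + r) := by
  simp only [cyclicShift]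
  rw [Nat.mod_eq_of_lt (by omega)]
  congr 1
  omega

theorem cyclicShift_of_lt_add {p : ℕ} (hp : p ≤ n) (hr : r ≤ n) (h : n < p + r) :
    cyclicShift n r x p = x (p + r - n) := by
  simp only [cyclicShift]
  rw [Nat.mod_eq_sub_mod (by omega), Nat.mod_eq_of_lt (by omega)]
  congr 1
  omega

theorem cyclicShift_mul_self (k : ℕ) : cyclicShift n (n * k) x = cyclicShift n 0 x := by
  funext p
  simp [cyclicShift]

theorem cyclicShift_zero_eqOn : EqOn (cyclicShift n 0 x) x (Icc 1 n) := fun p hp => by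
  simpa using cyclicShift_of_add_le (x := x) (r := 0) hp.1 (by simpa using hp.2)

theorem exists_cyclicShift_eq (hn : 0 < n) {j : ℕ} (hj : j ∈ Icc 1 n) :
    ∃ p ∈ Icc 1 n, cyclicShift n r x p = x j := by
  refine ⟨(j - 1 + (n - r % n)) % n + 1, ⟨Nat.le_add_left 1 _, Nat.mod_lt _ hn⟩, ?_⟩
  have hr : n - r % n + r = n * (r / n + 1) := by
    have := Nat.div_add_mod r n
    have := Nat.mod_lt r hn
    rw [Nat.mul_add]; omega
  change cyclicShift n (n - r % n) (cyclicShift n r x) j = x j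
  rw [cyclicShift_cyclicShift, hr, cyclicShift_mul_self, cyclicShift_zero_eqOn hj]

theorem cyclicShift_reflect (hn : 0 < n) {p : ℕ} (hp : p ∈ Icc 1 n) :
    cyclicShift n (n - r % n) (reflect n x) p = reflect n (cyclicShift n r x) p := by
  obtain ⟨hp₁, hp₂⟩ := hp
  simp only [cyclicShift, reflect]
  congr 1
  rw [← Nat.add_mod_mod (n + 1 - p - 1) r]
  have hr := Nat.mod_lt r hn
  generalize r % n = t at hr ⊢
  rcases le_or_gt t (p - 1) with h | h
  · rw [Nat.mod_eq_sub_mod (by omega : n ≤ p - 1 + (n - t)), Nat.mod_eq_of_lt (by omega),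
      Nat.mod_eq_of_lt (by omega : n + 1 - p - 1 + t < n)]
    omega
  · rw [Nat.mod_eq_of_lt (by omega : p - 1 + (n - t) < n),
      Nat.mod_eq_sub_mod (by omega : n ≤ n + 1 - p - 1 + t), Nat.mod_eq_of_lt (by omega)]
    omega

end CyclicShift

section Unimodal

variable [Preorder α] {n i : ℕ} {f g : ℕ → α}

theorem IsUnimodal.congr (h : IsUnimodal n f) (hfg : EqOn f g (Icc 1 n)) : IsUnimodal n g := by
  obtain ⟨i, hi, hmono, hanti⟩ := h
  exact ⟨i, hi, hmono.congr (hfg.mono (Icc_subset_Icc_right hi.2)),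
    hanti.congr (hfg.mono (Icc_subset_Icc_left hi.1))⟩

theorem AntitoneOn.reflect (h : AntitoneOn f (Icc i n)) :
    MonotoneOn (reflect n f) (Icc 1 (n + 1 - i)) := by
  rintro p ⟨hp₁, hp₂⟩ q ⟨hq₁, hq₂⟩ hpq
  exact h ⟨by omega, by omega⟩ ⟨by omega, by omega⟩ (by omega)

theorem MonotoneOn.reflect (h : MonotoneOn f (Icc 1 i)) :
    AntitoneOn (reflect n f) (Icc (n + 1 - i) n) := by
  rintro p ⟨hp₁, hp₂⟩ q ⟨hq₁, hq₂⟩ hpq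
  exact h ⟨by omega, by omega⟩ ⟨by omega, by omega⟩ (by omega)

theorem IsUnimodal.reflect (h : IsUnimodal n f) : IsUnimodal n (reflect n f) := by
  obtain ⟨i, ⟨hi₁, hi₂⟩, hmono, hanti⟩ := h
  exact ⟨n + 1 - i, ⟨by omega, by omega⟩, hanti.reflect, hmono.reflect⟩

end Unimodal

theorem isUnimodal_of_monotoneOn_of_antitoneOn [LinearOrder α] {n a : ℕ} {f : ℕ → α} (ha : a < n)
    (hmono : MonotoneOn f (Icc 1 a)) (hanti : AntitoneOn f (Icc (a + 1) n)) : IsUnimodal n f := by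
  by_cases hstep : a = 0 ∨ f a ≤ f (a + 1)
  · refine ⟨a + 1, ⟨by omega, by omega⟩, ?_, hanti⟩
    rintro p ⟨hp₁, hp₂⟩ q ⟨hq₁, hq₂⟩ hpq
    rcases Nat.lt_or_ge q (a + 1) with hq | hq
    · exact hmono ⟨hp₁, by omega⟩ ⟨hq₁, by omega⟩ hpq
    rcases Nat.lt_or_ge p (a + 1) with hp | hp
    · have ha₀ : a ≠ 0 := by omega
      obtain rfl : q = a + 1 := by omega
      exact (hmono ⟨hp₁, by omega⟩ ⟨by omega, le_rfl⟩ (by omega)).trans (hstep.resolve_left ha₀)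
    · obtain rfl : p = q := by omega
      exact le_rfl
  · rw [not_or, not_le] at hstep
    refine ⟨a, ⟨by omega, ha.le⟩, hmono, ?_⟩
    rintro p ⟨hp₁, hp₂⟩ q ⟨hq₁, hq₂⟩ hpq
    rcases Nat.lt_or_ge a p with hp | hp
    · exact hanti ⟨hp, hp₂⟩ ⟨by omega, hq₂⟩ hpq
    rw [show p = a by omega]
    rcases Nat.lt_or_ge a q with hq | hq
    · exact (hanti ⟨le_rfl, by omega⟩ ⟨hq, hq₂⟩ hq).trans hstep.2.le
    · rw [show q = a by omega]

section Bitonic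

variable {n : ℕ} {x y : ℕ → ℕ}

theorem bitonic_iff (hn : 0 < n) : Bitonic n x ↔ ∃ r, IsUnimodal n (cyclicShift n r x) := by
  constructor
  · rintro ⟨r, i, hi, hmono, hanti⟩
    refine ⟨r, max i 1, ⟨le_max_right _ _, max_le hi hn⟩, ?_, ?_⟩
    · rintro p ⟨hp₁, hp₂⟩ q ⟨hq₁, hq₂⟩ hpq
      rcases Nat.lt_or_ge i 1 with hi₀ | hi₁
      · obtain rfl : p = q := by omega
        exact le_rfl
      · exact hmono p q hp₁ hpq (by omega)
    · rintro p ⟨hp₁, hp₂⟩ q ⟨hq₁, hq₂⟩ hpq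
      exact hanti p q (by omega) hpq hq₂
  · rintro ⟨r, i, ⟨hi₁, hi₂⟩, hmono, hanti⟩
    exact ⟨r, i, hi₂, fun p q hp hpq hq => hmono ⟨hp, hpq.trans hq⟩ ⟨hp.trans hpq, hq⟩ hpq,
      fun p q hp hpq hq => hanti ⟨hp, hpq.trans hq⟩ ⟨hp.trans hpq, hq⟩ hpq⟩

theorem Bitonic.of_cyclicShift (hn : 0 < n) {s : ℕ} (h : Bitonic n (cyclicShift n s x)) :
    Bitonic n x := by
  obtain ⟨r, hr⟩ := (bitonic_iff hn).1 h
  exact (bitonic_iff hn).2 ⟨r + s, by rwa [← cyclicShift_cyclicShift]⟩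

theorem Bitonic.congr (hn : 0 < n) (h : Bitonic n x) (hxy : EqOn x y (Icc 1 n)) : Bitonic n y := by
  obtain ⟨r, hr⟩ := (bitonic_iff hn).1 h
  exact (bitonic_iff hn).2 ⟨r, by rwa [← cyclicShift_congr hn hxy]⟩

theorem IsUnimodal.bitonic (h : IsUnimodal n x) : Bitonic n x := by
  have hn : 0 < n := by obtain ⟨i, ⟨hi₁, hi₂⟩, -⟩ := h; omega
  exact (bitonic_iff hn).2 ⟨0, h.congr cyclicShift_zero_eqOn.symm⟩

theorem Bitonic.reflect (hn : 0 < n) (h : Bitonic n x) : Bitonic n (reflect n x) := by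
  obtain ⟨r, hr⟩ := (bitonic_iff hn).1 h
  exact (bitonic_iff hn).2
    ⟨n - r % n, hr.reflect.congr fun p hp => (cyclicShift_reflect hn hp).symm⟩

theorem bitonic_of_antitoneOn_of_monotoneOn_of_antitoneOn {k i : ℕ} (hk : k ∈ Icc 1 i) (hi : i ≤ n)
    (hanti₁ : AntitoneOn x (Icc 1 (k - 1))) (hmono : MonotoneOn x (Icc k i))
    (hanti₂ : AntitoneOn x (Icc i n)) (hwrap : ∀ p ∈ Icc 1 (k - 1), x p ≤ x n) : Bitonic n x := by
  -- shifting by `k - 1` moves the block `[1, k - 1]` behind `[i, n]`, and `hwrap` glues the two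
  obtain ⟨hk₁, hki⟩ := hk
  have head {p} (hp₁ : 1 ≤ p) (hp₂ : p + (k - 1) ≤ n) := cyclicShift_of_add_le (x := x) hp₁ hp₂
  have tail {p} (hp₁ : p ≤ n) (hp₂ : n < p + (k - 1)) :=
    cyclicShift_of_lt_add (x := x) hp₁ (by omega) hp₂
  refine (bitonic_iff (by omega)).2 ⟨k - 1, i - (k - 1), ⟨by omega, by omega⟩, ?_, ?_⟩
  · rintro p ⟨hp₁, hp₂⟩ q ⟨hq₁, hq₂⟩ hpq
    rw [head hp₁ (by omega), head hq₁ (by omega)]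
    exact hmono ⟨by omega, by omega⟩ ⟨by omega, by omega⟩ (by omega)
  · rintro p ⟨hp₁, hp₂⟩ q ⟨hq₁, hq₂⟩ hpq
    rcases le_or_gt (q + (k - 1)) n with hq | hq
    · rw [head (p := p) (by omega) (by omega), head (by omega) hq]
      exact hanti₂ ⟨by omega, by omega⟩ ⟨by omega, by omega⟩ (by omega)
    rw [tail hq₂ hq]
    rcases le_or_gt (p + (k - 1)) n with hp | hp
    · rw [head (by omega) hp]
      exact (hwrap _ ⟨by omega, by omega⟩).trans
        (hanti₂ ⟨by omega, by omega⟩ ⟨hi, le_rfl⟩ (by omega))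
    · rw [tail hp₂ hp]
      exact hanti₁ ⟨by omega, by omega⟩ ⟨by omega, by omega⟩ (by omega)

end Bitonic

def splitMax [LinearOrder α] (m : ℕ) (b : ℕ → α) : ℕ → α := fun p => max (b p) (b (p + m))

def splitMin [LinearOrder α] (m : ℕ) (b : ℕ → α) : ℕ → α := fun p => min (b p) (b (p + m))

theorem mod_two_mul_cases {m : ℕ} (hm : 0 < m) (t : ℕ) :
    (t % (2 * m) = t % m ∧ (t + m) % (2 * m) = t % m + m) ∨
      (t % (2 * m) = t % m + m ∧ (t + m) % (2 * m) = t % m) := by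
  rw [mul_comm 2 m, Nat.mod_mul, Nat.mod_mul, Nat.add_mod_right, Nat.add_div_right _ hm]
  rcases Nat.mod_two_eq_zero_or_one (t / m) with h | h
  · left
    rw [h, Nat.succ_mod_two_eq_one_iff.2 h]
    simp
  · right
    rw [h, Nat.succ_mod_two_eq_zero_iff.2 h]
    simp

section Split

variable [LinearOrder α] {m : ℕ} {b c : ℕ → α}

theorem splitMax_cyclicShift (hm : 0 < m) (r : ℕ) {p : ℕ} (hp : 1 ≤ p) :
    splitMax m (cyclicShift (2 * m) r b) p = cyclicShift m r (splitMax m b) p := by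
  have hidx : p + m - 1 + r = p - 1 + r + m := by omega
  simp only [splitMax, cyclicShift, hidx]
  rcases mod_two_mul_cases hm (p - 1 + r) with ⟨h₁, h₂⟩ | ⟨h₁, h₂⟩ <;> rw [h₁, h₂]
  · rw [Nat.add_right_comm]
  · rw [Nat.add_right_comm, max_comm]

theorem splitMin_cyclicShift (hm : 0 < m) (r : ℕ) {p : ℕ} (hp : 1 ≤ p) :
    splitMin m (cyclicShift (2 * m) r b) p = cyclicShift m r (splitMin m b) p := by
  have hidx : p + m - 1 + r = p - 1 + r + m := by omega
  simp only [splitMin, cyclicShift, hidx]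
  rcases mod_two_mul_cases hm (p - 1 + r) with ⟨h₁, h₂⟩ | ⟨h₁, h₂⟩ <;> rw [h₁, h₂]
  · rw [Nat.add_right_comm]
  · rw [Nat.add_right_comm, min_comm]

theorem reflect_splitMax_reflect {p : ℕ} (hp : p ∈ Icc 1 m) :
    reflect m (splitMax m (reflect (2 * m) c)) p = splitMax m c p := by
  obtain ⟨hp₁, hp₂⟩ := hp
  simp only [reflect, splitMax]
  rw [max_comm]
  congr 2 <;> omega

theorem reflect_splitMin_reflect {p : ℕ} (hp : p ∈ Icc 1 m) :
    reflect m (splitMin m (reflect (2 * m) c)) p = splitMin m c p := by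
  obtain ⟨hp₁, hp₂⟩ := hp
  simp only [reflect, splitMin]
  rw [min_comm]
  congr 2 <;> omega

variable {i : ℕ}

theorem splitMin_le_splitMax (hmono : MonotoneOn c (Icc 1 i))
    (hanti : AntitoneOn c (Icc i (2 * m))) {p q : ℕ} (hp : p ∈ Icc 1 m) (hq : q ∈ Icc 1 m) :
    splitMin m c q ≤ splitMax m c p := by
  obtain ⟨hp₁, hp₂⟩ := hp
  obtain ⟨hq₁, hq₂⟩ := hq
  simp only [splitMin, splitMax]
  rcases le_or_gt p q with hpq | hpq
  · rcases le_or_gt i (p + m) with hip | hip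
    · exact min_le_of_right_le <| le_max_of_le_right <|
        hanti ⟨hip, by omega⟩ ⟨by omega, by omega⟩ (by omega)
    · exact min_le_of_left_le <| le_max_of_le_right <|
        hmono ⟨hq₁, by omega⟩ ⟨by omega, hip.le⟩ (by omega)
  · rcases le_or_gt p i with hip | hip
    · exact min_le_of_left_le <| le_max_of_le_left <| hmono ⟨hq₁, by omega⟩ ⟨hp₁, hip⟩ hpq.le
    · exact min_le_of_right_le <| le_max_of_le_left <|
        hanti ⟨hip.le, by omega⟩ ⟨by omega, by omega⟩ (by omega)

theorem exists_crossing (hi : i ∈ Icc 1 m) (hmono : MonotoneOn c (Icc 1 i))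
    (hanti : AntitoneOn c (Icc i (2 * m))) :
    ∃ k ∈ Icc 1 i, (∀ p ∈ Ico 1 k, c p < c (p + m)) ∧ ∀ p ∈ Icc k m, c (p + m) ≤ c p := by
  obtain ⟨hi₁, hi₂⟩ := hi
  have hpeak : c (i + m) ≤ c i := hanti ⟨le_rfl, by omega⟩ ⟨by omega, by omega⟩ (by omega)
  have hex : ∃ k, 1 ≤ k ∧ c (k + m) ≤ c k := ⟨i, hi₁, hpeak⟩
  set k := Nat.find hex
  obtain ⟨hk₁, hk⟩ : 1 ≤ k ∧ c (k + m) ≤ c k := Nat.find_spec hex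
  have hki : k ≤ i := Nat.find_min' hex ⟨hi₁, hpeak⟩
  refine ⟨k, ⟨hk₁, hki⟩, fun p ⟨hp₁, hp₂⟩ => ?_, fun p ⟨hp₁, hp₂⟩ => ?_⟩
  · exact lt_of_not_ge fun h => Nat.find_min hex hp₂ ⟨hp₁, h⟩
  · rcases le_total p i with hpi | hip
    · calc c (p + m) ≤ c (k + m) := hanti ⟨by omega, by omega⟩ ⟨by omega, by omega⟩ (by omega)
        _ ≤ c k := hk
        _ ≤ c p := hmono ⟨hk₁, hki⟩ ⟨by omega, hpi⟩ hp₁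
    · exact hanti ⟨hip, by omega⟩ ⟨by omega, by omega⟩ (by omega)

end Split

theorem isUnimodal_splitMin_of_peak_le [LinearOrder α] {m i : ℕ} {c : ℕ → α} (hi : i ∈ Icc 1 m)
    (hmono : MonotoneOn c (Icc 1 i)) (hanti : AntitoneOn c (Icc i (2 * m))) :
    IsUnimodal m (splitMin m c) := by
  obtain ⟨k, ⟨hk₁, hki⟩, hbelow, habove⟩ := exists_crossing hi hmono hanti
  obtain ⟨hi₁, hi₂⟩ := hi
  refine isUnimodal_of_monotoneOn_of_antitoneOn (a := k - 1) (by omega) ?_ ?_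
  · rintro p ⟨hp₁, hp₂⟩ q ⟨hq₁, hq₂⟩ hpq
    rw [splitMin, splitMin, min_eq_left (hbelow p ⟨hp₁, by omega⟩).le,
      min_eq_left (hbelow q ⟨hq₁, by omega⟩).le]
    exact hmono ⟨hp₁, by omega⟩ ⟨hq₁, by omega⟩ hpq
  · rintro p ⟨hp₁, hp₂⟩ q ⟨hq₁, hq₂⟩ hpq
    rw [splitMin, splitMin, min_eq_right (habove p ⟨by omega, hp₂⟩),
      min_eq_right (habove q ⟨by omega, hq₂⟩)]
    exact hanti ⟨by omega, by omega⟩ ⟨by omega, by omega⟩ (by omega)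

theorem bitonic_splitMax_of_peak_le {m i : ℕ} {c : ℕ → ℕ} (hi : i ∈ Icc 1 m)
    (hmono : MonotoneOn c (Icc 1 i)) (hanti : AntitoneOn c (Icc i (2 * m))) :
    Bitonic m (splitMax m c) := by
  obtain ⟨k, hk, hbelow, habove⟩ := exists_crossing hi hmono hanti
  obtain ⟨hk₁, hki⟩ := hk
  obtain ⟨hi₁, hi₂⟩ := hi
  have hlow {p} (hp : p ∈ Ico 1 k) : splitMax m c p = c (p + m) := max_eq_right (hbelow p hp).le
  have hhigh {p} (hp : p ∈ Icc k m) : splitMax m c p = c p := max_eq_left (habove p hp)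
  refine bitonic_of_antitoneOn_of_monotoneOn_of_antitoneOn ⟨hk₁, hki⟩ hi₂ ?_ ?_ ?_ ?_
  · rintro p ⟨hp₁, hp₂⟩ q ⟨hq₁, hq₂⟩ hpq
    rw [hlow ⟨hp₁, by omega⟩, hlow ⟨hq₁, by omega⟩]
    exact hanti ⟨by omega, by omega⟩ ⟨by omega, by omega⟩ (by omega)
  · rintro p ⟨hp₁, hp₂⟩ q ⟨hq₁, hq₂⟩ hpq
    rw [hhigh ⟨hp₁, by omega⟩, hhigh ⟨hq₁, by omega⟩]
    exact hmono ⟨by omega, hp₂⟩ ⟨by omega, hq₂⟩ hpq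
  · rintro p ⟨hp₁, hp₂⟩ q ⟨hq₁, hq₂⟩ hpq
    rw [hhigh ⟨by omega, hp₂⟩, hhigh ⟨by omega, hq₂⟩]
    exact hanti ⟨hp₁, by omega⟩ ⟨hq₁, by omega⟩ hpq
  · rintro p ⟨hp₁, hp₂⟩
    rw [hlow ⟨hp₁, by omega⟩, hhigh ⟨by omega, le_rfl⟩]
    exact hanti ⟨by omega, by omega⟩ ⟨by omega, by omega⟩ (by omega)

theorem bitonic_splitMax_splitMin {m i : ℕ} {c : ℕ → ℕ} (hi : i ∈ Icc 1 (2 * m))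
    (hmono : MonotoneOn c (Icc 1 i)) (hanti : AntitoneOn c (Icc i (2 * m))) :
    Bitonic m (splitMax m c) ∧ Bitonic m (splitMin m c) := by
  obtain ⟨hi₁, hi₂⟩ := hi
  rcases le_or_gt i m with him | hmi
  · exact ⟨bitonic_splitMax_of_peak_le ⟨hi₁, him⟩ hmono hanti,
      (isUnimodal_splitMin_of_peak_le ⟨hi₁, him⟩ hmono hanti).bitonic⟩
  have hi' : 2 * m + 1 - i ∈ Icc 1 m := ⟨by omega, by omega⟩
  have hm : 0 < m := by omega
  exact ⟨((bitonic_splitMax_of_peak_le hi' hanti.reflect hmono.reflect).reflect hm).congr hm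
      fun p hp => reflect_splitMax_reflect hp,
    ((isUnimodal_splitMin_of_peak_le hi' hanti.reflect hmono.reflect).bitonic.reflect hm).congr hm
      fun p hp => reflect_splitMin_reflect hp⟩

theorem Bitonic.split {m : ℕ} {b : ℕ → ℕ} (hm : 0 < m) (hb : Bitonic (2 * m) b) :
    Bitonic m (splitMax m b) ∧ Bitonic m (splitMin m b) ∧
      ∀ p ∈ Icc 1 m, ∀ q ∈ Icc 1 m, splitMin m b q ≤ splitMax m b p := by
  obtain ⟨r, i, hi, hmono, hanti⟩ := (bitonic_iff (by omega)).1 hb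
  set c := cyclicShift (2 * m) r b
  have hmax : EqOn (splitMax m c) (cyclicShift m r (splitMax m b)) (Icc 1 m) :=
    fun p hp => splitMax_cyclicShift hm r hp.1
  have hmin : EqOn (splitMin m c) (cyclicShift m r (splitMin m b)) (Icc 1 m) :=
    fun p hp => splitMin_cyclicShift hm r hp.1
  obtain ⟨hbmax, hbmin⟩ := bitonic_splitMax_splitMin hi hmono hanti
  refine ⟨(hbmax.congr hm hmax).of_cyclicShift hm, (hbmin.congr hm hmin).of_cyclicShift hm,
    fun p hp q hq => ?_⟩
  obtain ⟨p', hp', hpp'⟩ := exists_cyclicShift_eq (r := r) (x := splitMax m b) hm hp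
  obtain ⟨q', hq', hqq'⟩ := exists_cyclicShift_eq (r := r) (x := splitMin m b) hm hq
  rw [← hpp', ← hqq', ← hmax hp', ← hmin hq']
  exact splitMin_le_splitMax hmono hanti hp' hq'

/-- If `b` of length `n = 2m` is bitonic and `y = split(b)`, then `left(y)` and
`right(y)` are bitonic and `left(y) ⪰ right(y)`. -/
theorem split_of_bitonic (m : ℕ) (hm : 1 ≤ m) (b y : ℕ → ℕ)
    (hb : Bitonic (2 * m) b)
    (hy : ∀ i, 1 ≤ i → i ≤ m →
      y i = max (b i) (b (i + m)) ∧ y (i + m) = min (b i) (b (i + m))) :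
    Bitonic m (fun i => y i) ∧ Bitonic m (fun i => y (i + m)) ∧
      ∀ i j, 1 ≤ i → i ≤ m → 1 ≤ j → j ≤ m → y (j + m) ≤ y i := by
  obtain ⟨hmax, hmin, hcross⟩ := hb.split hm
  refine ⟨hmax.congr hm fun i hi => (hy i hi.1 hi.2).1.symm,
    hmin.congr hm fun i hi => (hy i hi.1 hi.2).2.symm, fun i j hi₁ hi₂ hj₁ hj₂ => ?_⟩
  rw [(hy i hi₁ hi₂).1, (hy j hj₁ hj₂).2]
  exact hcross i ⟨hi₁, hi₂⟩ j ⟨hj₁, hj₂⟩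
end

section
/- If l is top k sorted, r is top k/2 sorted, and (l_1,...,l_{k/2}) dominates (r_1,...,r_{k/2}) pointwise, then the k largest elements of the concatenation l :: r are contained among (l_1,...,l_k, r_1,...,r_{k/2}). -/
/-- `x` (entries at indices `1..n`) is top `k` sorted: the first `k` entries are
nonincreasing and dominate all remaining entries. -/
def TopSorted (k n : ℕ) (x : ℕ → ℕ) : Prop :=
  (∀ p q, 1 ≤ p → p ≤ q → q ≤ k → x q ≤ x p) ∧
  (∀ p q, 1 ≤ p → p ≤ k → k < q → q ≤ n → x q ≤ x p)

/-!
An element `v` at a non-candidate position of `l` lies below all of `l 1, …, l k`.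
An element `v` at a non-candidate position of `r` lies below all of `r 1, …, r (k/2)`,
hence, by domination, below all of `l 1, …, l (k/2)` as well: `k/2 + k/2` candidates.
-/

open Finset

lemma Finset.card_le_card_filter_le_map {ι α : Type*} [LE α] [DecidableLE α]
    {s t : Finset ι} {f : ι → α} {v : α} (hst : s ⊆ t) (hs : ∀ j ∈ s, v ≤ f j) :
    #s ≤ ((t.val.map f).filter (fun x => v ≤ x)).card := by
  have hfilter : (s.val.map f).filter (fun x => v ≤ x) = s.val.map f := by
    rw [Multiset.filter_eq_self]
    rintro _ hx
    obtain ⟨j, hj, rfl⟩ := Multiset.mem_map.mp hx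
    exact hs j hj
  calc #s = ((s.val.map f).filter (fun x => v ≤ x)).card := by
        rw [hfilter, Multiset.card_map, card_val]
    _ ≤ ((t.val.map f).filter (fun x => v ≤ x)).card :=
        Multiset.card_le_card <| Multiset.filter_le_filter _ <|
          Multiset.map_le_map <| val_le_iff.mpr hst

lemma TopSorted.apply_le_of_mem_Icc {k n : ℕ} {x : ℕ → ℕ} (hx : TopSorted k n x)
    {i j : ℕ} (hj : j ∈ Icc 1 k) (hi : k < i) (hin : i ≤ n) : x i ≤ x j := by
  rw [mem_Icc] at hj
  exact hx.2 j i hj.1 hj.2 hi hin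

theorem k_largest_in_candidates_general (t h : ℕ)
    (l r : ℕ → ℕ)
    (hl : TopSorted (2 * t) h l) (hr : TopSorted t h r)
    (hdom : ∀ i, 1 ≤ i → i ≤ t → r i ≤ l i) :
    ∀ v : ℕ,
      ((∃ i, 2 * t < i ∧ i ≤ h ∧ v = l i) ∨ (∃ i, t < i ∧ i ≤ h ∧ v = r i)) →
      2 * t ≤ (Multiset.filter (fun x => v ≤ x)
        (((Finset.Icc 1 (2 * t)).val.map l) + ((Finset.Icc 1 t).val.map r))).card := by
  rintro v (⟨i, hi, hih, rfl⟩ | ⟨i, hi, hih, rfl⟩) <;> rw [Multiset.filter_add, Multiset.card_add]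
  · have hl_count := card_le_card_filter_le_map (f := l) subset_rfl
      fun j hj => hl.apply_le_of_mem_Icc hj hi hih
    rw [Nat.card_Icc] at hl_count
    omega
  · have hl_count := card_le_card_filter_le_map (f := l)
      (Icc_subset_Icc_right (by omega : t ≤ 2 * t))
      fun j hj => (hr.apply_le_of_mem_Icc hj hi hih).trans <|
        hdom j (mem_Icc.mp hj).1 (mem_Icc.mp hj).2
    have hr_count := card_le_card_filter_le_map (f := r) subset_rfl
      fun j hj => hr.apply_le_of_mem_Icc hj hi hih
    rw [Nat.card_Icc] at hl_count hr_count
    omega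

/-- If `l` is top `k` sorted, `r` is top `k/2` sorted (both of length `h`), and
`(l 1,...,l (k/2))` dominates `(r 1,...,r (k/2))` pointwise, then the `k` largest
elements of `l :: r` are among `(l 1,...,l k, r 1,...,r (k/2))`: every element at
a non-candidate position is dominated by at least `k` candidate elements. -/
theorem k_largest_in_candidates (t h : ℕ) (ht : 1 ≤ t) (hh : 2 * t ≤ h)
    (l r : ℕ → ℕ)
    (hl : TopSorted (2 * t) h l) (hr : TopSorted t h r)
    (hdom : ∀ i, 1 ≤ i → i ≤ t → r i ≤ l i) :
    ∀ v : ℕ,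
      ((∃ i, 2 * t < i ∧ i ≤ h ∧ v = l i) ∨ (∃ i, t < i ∧ i ≤ h ∧ v = r i)) →
      2 * t ≤ (Multiset.filter (fun x => v ≤ x)
        (((Finset.Icc 1 (2 * t)).val.map l) + ((Finset.Icc 1 t).val.map r))).card :=
  k_largest_in_candidates_general t h l r hl hr hdom
end

section
/- Let l be top k sorted, r be top k/2 sorted, with (l_1,...,l_{k/2}) dominating (r_1,...,r_{k/2}) pointwise. Apply the bitonic splitter to (l_{k/2+1},...,l_k, r_1,...,r_{k/2}), obtaining y (y_i = max{l_{k/2+i}, r_{k/2-i+1}} for the first half, mins in second half in reversed pairing). Then b = (l_1,...,l_{k/2}, y_1,...,y_{k/2}) is bitonic and contains the k largest elements of l :: r. -/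
open Set

section Unimodal

variable {β α : Type*} [LinearOrder α]

lemma AntitoneOn.min_le_max_of_monotoneOn [LinearOrder β] {f g : β → α} {s : Set β}
    (hf : AntitoneOn f s) (hg : MonotoneOn g s) {i j : β} (hi : i ∈ s) (hj : j ∈ s) :
    min (f j) (g j) ≤ max (f i) (g i) := by
  rcases le_total i j with hij | hji
  · exact (min_le_left _ _).trans ((hf hi hj hij).trans (le_max_left _ _))
  · exact (min_le_right _ _).trans ((hg hj hi hji).trans (le_max_right _ _))

/-- At a minimum `s` of `max f g`, each of `f` and `g` is dominated on the far side of `s`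
by its value at `s`. -/
lemma AntitoneOn.max_antitoneOn_monotoneOn_of_isMinOn [Preorder β] {f g : β → α} {a c s : β}
    (hf : AntitoneOn f (Icc a c)) (hg : MonotoneOn g (Icc a c)) (hs : s ∈ Icc a c)
    (hmin : IsMinOn (fun i => max (f i) (g i)) (Icc a c) s) :
    AntitoneOn (fun i => max (f i) (g i)) (Icc a s) ∧
      MonotoneOn (fun i => max (f i) (g i)) (Icc s c) := by
  have hle : ∀ i ∈ Icc a c, max (f s) (g s) ≤ max (f i) (g i) := fun i hi => hmin hi
  constructor
  · intro p hp q hq hpq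
    have hp' : p ∈ Icc a c := ⟨hp.1, hp.2.trans hs.2⟩
    have hq' : q ∈ Icc a c := ⟨hp.1.trans hpq, hq.2.trans hs.2⟩
    refine max_le ((hf hp' hq' hpq).trans (le_max_left _ _)) ?_
    exact (hg hq' hs hq.2).trans ((le_max_right _ _).trans (hle p hp'))
  · intro p hp q hq hpq
    have hp' : p ∈ Icc a c := ⟨hs.1.trans hp.1, hpq.trans hq.2⟩
    have hq' : q ∈ Icc a c := ⟨hs.1.trans hq.1, hq.2⟩
    refine max_le ?_ ((hg hp' hq' hpq).trans (le_max_right _ _))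
    exact (hf hs hp' hp.1).trans ((le_max_left _ _).trans (hle q hq'))

lemma MonotoneOn.unimodal_of_isMaxOn [LinearOrder β] {x : β → α} {a m n i : β}
    (hinc : MonotoneOn x (Icc a m)) (hdec : AntitoneOn x (Ioc m n)) (hi : i ∈ Icc a n)
    (hmax : IsMaxOn x (Icc a n) i) :
    MonotoneOn x (Icc a i) ∧ AntitoneOn x (Icc i n) := by
  constructor
  · intro p hp q hq hpq
    rcases le_or_gt q m with hqm | hmq
    · exact hinc ⟨hp.1, hpq.trans hqm⟩ ⟨hp.1.trans hpq, hqm⟩ hpq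
    · exact (hmax ⟨hp.1, hp.2.trans hi.2⟩ :).trans
        (hdec ⟨hmq, hq.2.trans hi.2⟩ ⟨hmq.trans_le hq.2, hi.2⟩ hq.2)
  · intro p hp q hq hpq
    rcases le_or_gt p m with hpm | hmp
    · exact (hmax ⟨hi.1.trans (hp.1.trans hpq), hq.2⟩ :).trans
        (hinc ⟨hi.1, hp.1.trans hpm⟩ ⟨hi.1.trans hp.1, hpm⟩ hp.1)
    · exact hdec ⟨hmp, hp.2⟩ ⟨hmp.trans_le hpq, hq.2⟩ hpq

end Unimodal

lemma TopSorted.antitoneOn {k n : ℕ} {x : ℕ → ℕ} (hx : TopSorted k n x) :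
    AntitoneOn x (Icc 1 k) :=
  fun p hp q hq hpq => hx.1 p q hp.1 hpq hq.2

lemma rotate_index_of_le {n s p : ℕ} (hp : 1 ≤ p) (hps : p + s ≤ n + 1) (hs : 1 ≤ s) :
    (p - 1 + (s - 1)) % n + 1 = p + s - 1 :=
  by rw [Nat.mod_eq_of_lt (by omega)]; omega

lemma rotate_index_of_gt {n s p : ℕ} (hpn : p ≤ n) (hps : n + 1 < p + s) (hsn : s ≤ n) :
    (p - 1 + (s - 1)) % n + 1 = p + s - 1 - n := by
  rw [show p - 1 + (s - 1) = p + s - 2 - n + n by omega, Nat.add_mod_right,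
    Nat.mod_eq_of_lt (by omega)]
  omega

/-- Rotating a valley so that it starts at its bottom `s` gives a sequence that increases
up to index `n - s + 1` and decreases from the next index on. -/
theorem Bitonic.of_antitoneOn_monotoneOn {n s : ℕ} {x : ℕ → ℕ} (hs : s ∈ Icc 1 n)
    (hdec : AntitoneOn x (Icc 1 s)) (hinc : MonotoneOn x (Icc s n)) : Bitonic n x := by
  obtain ⟨hs1, hsn⟩ := hs
  set y : ℕ → ℕ := fun p => x ((p - 1 + (s - 1)) % n + 1) with hy
  have hy_inc : MonotoneOn y (Icc 1 (n - s + 1)) := by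
    rintro p ⟨hp1, hp2⟩ q ⟨hq1, hq2⟩ hpq
    simp only [hy, rotate_index_of_le hp1 (by omega : p + s ≤ n + 1) hs1,
      rotate_index_of_le hq1 (by omega : q + s ≤ n + 1) hs1]
    exact hinc ⟨by omega, by omega⟩ ⟨by omega, by omega⟩ (by omega)
  have hy_dec : AntitoneOn y (Ioc (n - s + 1) n) := by
    rintro p ⟨hp1, hp2⟩ q ⟨hq1, hq2⟩ hpq
    simp only [hy, rotate_index_of_gt hp2 (by omega : n + 1 < p + s) hsn,
      rotate_index_of_gt hq2 (by omega : n + 1 < q + s) hsn]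
    exact hdec ⟨by omega, by omega⟩ ⟨by omega, by omega⟩ (by omega)
  obtain ⟨i, hi, hmax⟩ := (Finset.Icc 1 n).exists_max_image y
    (Finset.nonempty_Icc.2 (hs1.trans hsn))
  rw [Finset.mem_Icc] at hi
  obtain ⟨hy_up, hy_down⟩ := hy_inc.unimodal_of_isMaxOn hy_dec hi
    (fun j hj => hmax j (Finset.mem_Icc.2 hj))
  exact ⟨s - 1, i, hi.2,
    fun p q hp hpq hq => hy_up ⟨hp, hpq.trans hq⟩ ⟨hp.trans hpq, hq⟩ hpq,
    fun p q hp hpq hq => hy_down ⟨hp, hpq.trans hq⟩ ⟨hp.trans hpq, hq⟩ hpq⟩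

def padReverse (t : ℕ) (r : ℕ → ℕ) (i : ℕ) : ℕ :=
  if i ≤ t then 0 else r (2 * t + 1 - i)

lemma monotoneOn_padReverse {t : ℕ} {r : ℕ → ℕ} (hr : AntitoneOn r (Icc 1 t)) :
    MonotoneOn (padReverse t r) (Icc 1 (2 * t)) := by
  rintro p ⟨hp1, hp2⟩ q ⟨hq1, hq2⟩ hpq
  unfold padReverse
  split_ifs with hpt hqt hqt
  · exact le_rfl
  · exact Nat.zero_le _
  · omega
  · exact hr ⟨by omega, by omega⟩ ⟨by omega, by omega⟩ (by omega)

lemma padReverse_add {t j : ℕ} (r : ℕ → ℕ) (hj : 1 ≤ j) (hjt : j ≤ t) :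
    padReverse t r (t + j) = r (t - j + 1) := by
  rw [padReverse, if_neg (by omega)]
  congr 1
  omega

lemma eqOn_max_padReverse {t : ℕ} {l r b : ℕ → ℕ}
    (hb1 : ∀ i, 1 ≤ i → i ≤ t → b i = l i)
    (hb2 : ∀ i, 1 ≤ i → i ≤ t → b (t + i) = max (l (t + i)) (r (t - i + 1))) :
    EqOn (fun i => max (l i) (padReverse t r i)) b (Icc 1 (2 * t)) := by
  rintro i ⟨hi1, hi2⟩
  rcases le_or_gt i t with hit | hti
  · simp [padReverse, hit, hb1 i hi1 hit]
  · obtain ⟨j, rfl⟩ : ∃ j, i = t + j := ⟨i - t, by omega⟩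
    dsimp only
    rw [hb2 j (by omega) (by omega), padReverse_add r (by omega) (by omega)]

theorem pw_bit_merge_step_general (t h : ℕ) (ht : 1 ≤ t)
    (l r b : ℕ → ℕ)
    (hl : TopSorted (2 * t) h l) (hr : TopSorted t h r)
    (hdom : ∀ i, 1 ≤ i → i ≤ t → r i ≤ l i)
    (hb1 : ∀ i, 1 ≤ i → i ≤ t → b i = l i)
    (hb2 : ∀ i, 1 ≤ i → i ≤ t → b (t + i) = max (l (t + i)) (r (t - i + 1))) :
    Bitonic (2 * t) b ∧
      ∀ i, 1 ≤ i → i ≤ 2 * t →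
        (∀ j, 2 * t < j → j ≤ h → l j ≤ b i) ∧
        (∀ j, t < j → j ≤ h → r j ≤ b i) ∧
        (∀ j, 1 ≤ j → j ≤ t → min (l (t + j)) (r (t - j + 1)) ≤ b i) := by
  have hL : AntitoneOn l (Icc 1 (2 * t)) := hl.antitoneOn
  have hR : MonotoneOn (padReverse t r) (Icc 1 (2 * t)) := monotoneOn_padReverse hr.antitoneOn
  have hb := eqOn_max_padReverse hb1 hb2
  obtain ⟨s, hs, hmin⟩ := (Finset.Icc 1 (2 * t)).exists_min_image
    (fun i => max (l i) (padReverse t r i)) (Finset.nonempty_Icc.2 (by omega))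
  rw [Finset.mem_Icc] at hs
  obtain ⟨hdec, hinc⟩ := hL.max_antitoneOn_monotoneOn_of_isMinOn hR hs
    (fun j hj => hmin j (Finset.mem_Icc.2 hj))
  refine ⟨Bitonic.of_antitoneOn_monotoneOn hs
      (hdec.congr (hb.mono (Icc_subset_Icc_right hs.2)))
      (hinc.congr (hb.mono (Icc_subset_Icc_left hs.1))), fun i hi1 hi2 => ?_⟩
  have hi : i ∈ Icc 1 (2 * t) := ⟨hi1, hi2⟩
  rw [← hb hi]
  refine ⟨fun j hj1 hj2 => (hl.2 i j hi1 hi2 hj1 hj2).trans (le_max_left _ _),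
    fun j hj1 hj2 => (hr.2 t j ht le_rfl hj1 hj2).trans ?_, fun j hj1 hj2 => ?_⟩
  · rcases le_or_gt i t with hit | hti
    · exact (hdom t ht le_rfl).trans ((hL hi ⟨ht, by omega⟩ hit).trans (le_max_left _ _))
    · have hRt : padReverse t r (t + 1) = r t := by
        rw [padReverse_add r le_rfl ht, Nat.sub_add_cancel ht]
      exact hRt ▸ (hR ⟨by omega, by omega⟩ hi hti).trans (le_max_right _ _)
  · rw [← padReverse_add r hj1 hj2]
    exact hL.min_le_max_of_monotoneOn hR hi ⟨by omega, by omega⟩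

/-- First step of the improved pairwise merger: with `k = 2t`, applying the
bitonic splitter to `(l_{t+1},…,l_{2t}, r_1,…,r_t)` yields maxima
`y_i = max (l (t+i)) (r (t-i+1))`, and `b = (l_1,…,l_t, y_1,…,y_t)` is bitonic
and contains the `k` largest elements of `l :: r` (i.e. dominates every
discarded element). -/
theorem pw_bit_merge_step (t h : ℕ) (ht : 1 ≤ t) (hh : 2 * t ≤ h)
    (l r b : ℕ → ℕ)
    (hl : TopSorted (2 * t) h l) (hr : TopSorted t h r)
    (hdom : ∀ i, 1 ≤ i → i ≤ t → r i ≤ l i)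
    (hb1 : ∀ i, 1 ≤ i → i ≤ t → b i = l i)
    (hb2 : ∀ i, 1 ≤ i → i ≤ t → b (t + i) = max (l (t + i)) (r (t - i + 1))) :
    Bitonic (2 * t) b ∧
      ∀ i, 1 ≤ i → i ≤ 2 * t →
        (∀ j, 2 * t < j → j ≤ h → l j ≤ b i) ∧
        (∀ j, t < j → j ≤ h → r j ≤ b i) ∧
        (∀ j, 1 ≤ j → j ≤ t → min (l (t + j)) (r (t - j + 1)) ≤ b i) :=
  pw_bit_merge_step_general t h ht l r b hl hr hdom hb1 hb2
end

section
/- If b = (b_1,...,b_k) is v-shaped and s-dominating, then b is nonincreasing, or there exists i with k/2 < i < k such that b_i < b_{i+1}. -/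
/-- `b` (entries at indices `1..k`) is v-shaped: nonincreasing up to some index
`i`, then nondecreasing. -/
def VShaped (k : ℕ) (b : ℕ → ℕ) : Prop :=
  ∃ i, 1 ≤ i ∧ i ≤ k ∧
    (∀ p q, 1 ≤ p → p ≤ q → q ≤ i → b q ≤ b p) ∧
    (∀ p q, i ≤ p → p ≤ q → q ≤ k → b p ≤ b q)

/-- `b` (entries at indices `1..k`) is s-dominating: `b j ≥ b (k-j+1)` for all
`1 ≤ j ≤ k/2`. -/
def SDominating (k : ℕ) (b : ℕ → ℕ) : Prop :=
  ∀ j, 1 ≤ j → j ≤ k / 2 → b (k - j + 1) ≤ b j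

theorem exists_lt_add_one_of_not_antitoneOn_Icc {α : Type*} [LinearOrder α] {k : ℕ} {b : ℕ → α}
    (h : ¬ ∀ p q, 1 ≤ p → p ≤ q → q ≤ k → b q ≤ b p) :
    ∃ j, 1 ≤ j ∧ j < k ∧ b j < b (j + 1) := by
  contrapose! h
  have hanti : AntitoneOn b (Set.Icc 1 k) :=
    antitoneOn_of_add_one_le Set.ordConnected_Icc
      fun j _ hj hj1 ↦ h j hj.1 (Nat.lt_of_succ_le hj1.2)
  exact fun p q hp hpq hq ↦ hanti ⟨hp, hpq.trans hq⟩ ⟨hp.trans hpq, hq⟩ hpq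

theorem VShaped.le_of_lt_add_one {k j : ℕ} {b : ℕ → ℕ} (hv : VShaped k b) (hj : 1 ≤ j)
    (hasc : b j < b (j + 1)) : ∀ p q, j ≤ p → p ≤ q → q ≤ k → b p ≤ b q := by
  obtain ⟨i, -, -, hdec, hinc⟩ := hv
  have hij : i ≤ j := by
    by_contra! hji
    exact (hdec j (j + 1) hj j.le_succ hji).not_gt hasc
  exact fun p q hp ↦ hinc p q (hij.trans hp)

theorem SDominating.half_lt_of_lt_add_one {k j : ℕ} {b : ℕ → ℕ} (hv : VShaped k b)
    (hs : SDominating k b) (hj : 1 ≤ j) (hasc : b j < b (j + 1)) : k / 2 < j := by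
  by_contra! hjk
  -- `j + 1 ≤ k - j + 1` are both past the ascent, and `k - j + 1` is the mirror of `j`.
  have hmirror : b (j + 1) ≤ b (k - j + 1) :=
    hv.le_of_lt_add_one hj hasc (j + 1) (k - j + 1) j.le_succ (by omega) (by omega)
  exact (hmirror.trans (hs j hj hjk)).not_gt hasc

theorem vshape_sdom_cases_general (t : ℕ) (b : ℕ → ℕ)
    (hv : VShaped (2 * t) b) (hs : SDominating (2 * t) b) :
    (∀ p q, 1 ≤ p → p ≤ q → q ≤ 2 * t → b q ≤ b p) ∨
      ∃ i, t < i ∧ i < 2 * t ∧ b i < b (i + 1) := by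
  refine or_iff_not_imp_left.2 fun hnot ↦ ?_
  obtain ⟨j, hj, hjk, hasc⟩ := exists_lt_add_one_of_not_antitoneOn_Icc hnot
  have hhalf := hs.half_lt_of_lt_add_one hv hj hasc
  exact ⟨j, by omega, hjk, hasc⟩

/-- If `b` of (even) length `k = 2t` is v-shaped and s-dominating, then `b` is
nonincreasing or there exists `i` with `k/2 < i < k` and `b i < b (i+1)`. -/
theorem vshape_sdom_cases (t : ℕ) (ht : 1 ≤ t) (b : ℕ → ℕ)
    (hv : VShaped (2 * t) b) (hs : SDominating (2 * t) b) :
    (∀ p q, 1 ≤ p → p ≤ q → q ≤ 2 * t → b q ≤ b p) ∨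
      ∃ i, t < i ∧ i < 2 * t ∧ b i < b (i + 1) :=
  vshape_sdom_cases_general t b hv hs
end

section
/- If b of length k is v-shaped and s-dominating, then applying the half splitter (comparators on pairs (j, j+k/2) for j = k/4+1,...,k/2) gives the same result as applying the full splitter (comparators on pairs (j, j+k/2) for j = 1,...,k/2); i.e., for all 1 ≤ j ≤ k/4, b_j ≥ b_{j+k/2}. -/
theorem VShaped.apply_le_max {k : ℕ} {b : ℕ → ℕ} (hv : VShaped k b) {p q r : ℕ}
    (hp : 1 ≤ p) (hpq : p ≤ q) (hqr : q ≤ r) (hr : r ≤ k) :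
    b q ≤ max (b p) (b r) := by
  obtain ⟨i, -, -, hdec, hinc⟩ := hv
  rcases le_total q i with hqi | hiq
  · exact le_max_of_le_left (hdec p q hp hpq hqi)
  · exact le_max_of_le_right (hinc q r hiq hqr hr)

theorem half_split_eq_split_general (k : ℕ)
    (b : ℕ → ℕ) (hv : VShaped k b) (hs : SDominating k b) :
    ∀ j, 1 ≤ j → j ≤ k / 4 → b (j + k / 2) ≤ b j := by
  intro j hj hjk
  -- `j + k/2` lies between `j` and its mirror `k - j + 1`, which `b j` dominates.
  calc b (j + k / 2) ≤ max (b j) (b (k - j + 1)) :=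
        hv.apply_le_max hj (by omega) (by omega) (by omega)
    _ = b j := max_eq_left (hs j hj (by omega))

/-- If `b` of length `k` (a power of two, `k ≥ 4`) is v-shaped and s-dominating,
then the half splitter equals the full splitter on `b`: the omitted comparators
`(j, j + k/2)`, `1 ≤ j ≤ k/4`, would not change anything since `b j ≥ b (j+k/2)`. -/
theorem half_split_eq_split (k : ℕ) (hk : ∃ c, 2 ≤ c ∧ k = 2 ^ c)
    (b : ℕ → ℕ) (hv : VShaped k b) (hs : SDominating k b) :
    ∀ j, 1 ≤ j → j ≤ k / 4 → b (j + k / 2) ≤ b j :=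
  half_split_eq_split_general k b hv hs
end

section
/- For m ≥ 0 and k ≥ 1: ∑_{i=0}^{m−1} ∑_{j=0}^{i} C(i,j)·(k−j)·2^{k−j−1} = 2^k·(3/2)^m·(k + 1 − m/3) − 2^k·(k+1), where the right-hand side is interpreted as 2^{k−m}·3^{m−1}·(3(k+1) − m) − 2^k(k+1). -/
/-!
The inner sum splits as `2^(k-1) (k ∑ C(i,j) x^j - ∑ j C(i,j) x^j)` at `x = 1/2`, and both
binomial sums have closed forms: `(1 + x)^i` and, by `j C(i,j) = i C(i-1,j-1)`, `i x (1 + x)^(i-1)`.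
This gives the inner sum `2^(k-1) (3/2)^i (k - i/3)`, which is the forward difference of
`2^k (3/2)^i (k + 1 - i/3)`, so the outer sum telescopes.
-/

open Finset

section BinomialSums

variable {R : Type*} [CommSemiring R]

theorem sum_range_choose_mul_pow (x : R) (n : ℕ) :
    ∑ j ∈ range (n + 1), (n.choose j : R) * x ^ j = (x + 1) ^ n := by
  rw [add_pow]
  exact sum_congr rfl fun j _ => by rw [one_pow, mul_one, mul_comm]

theorem add_one_mul_sum_range_mul_choose_mul_pow (x : R) (n : ℕ) :
    (x + 1) * ∑ j ∈ range (n + 1), (j * n.choose j : R) * x ^ j = n * x * (x + 1) ^ n := by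
  cases n with
  | zero => simp
  | succ n =>
    have shift : ∑ j ∈ range (n + 2), (j * (n + 1).choose j : R) * x ^ j =
        (n + 1) * x * (x + 1) ^ n := by
      rw [sum_range_succ', Nat.cast_zero, zero_mul, zero_mul, add_zero,
        ← sum_range_choose_mul_pow, mul_sum]
      refine sum_congr rfl fun j _ => ?_
      have h := congrArg (Nat.cast : ℕ → R) (Nat.add_one_mul_choose_eq n j)
      push_cast at h ⊢
      rw [pow_succ, mul_comm (j + 1 : R), ← h]
      ring
    rw [shift]
    push_cast
    ring

end BinomialSums

theorem sum_range_choose_mul_sub_mul_pow_div (k i : ℕ) :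
    ∑ j ∈ range (i + 1), (i.choose j : ℚ) * ((k : ℚ) - j) * ((2 : ℚ) ^ k / 2 ^ (j + 1)) =
      2 ^ k / 2 * (3 / 2) ^ i * ((k : ℚ) - i / 3) := by
  have weighted :
      ∑ j ∈ range (i + 1), (j * i.choose j : ℚ) * (1 / 2) ^ j = i / 3 * (3 / 2) ^ i := by
    have h := add_one_mul_sum_range_mul_choose_mul_pow (1 / 2 : ℚ) i
    norm_num at h ⊢
    linear_combination (2 / 3 : ℚ) * h
  calc ∑ j ∈ range (i + 1), (i.choose j : ℚ) * ((k : ℚ) - j) * ((2 : ℚ) ^ k / 2 ^ (j + 1))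
      = 2 ^ k / 2 * (k * ∑ j ∈ range (i + 1), (i.choose j : ℚ) * (1 / 2) ^ j
          - ∑ j ∈ range (i + 1), (j * i.choose j : ℚ) * (1 / 2) ^ j) := by
        rw [mul_sum, ← sum_sub_distrib, mul_sum]
        exact sum_congr rfl fun j _ => by rw [one_div, inv_pow, pow_succ]; field_simp
    _ = 2 ^ k / 2 * (3 / 2) ^ i * ((k : ℚ) - i / 3) := by
        rw [sum_range_choose_mul_pow, weighted]
        ring

theorem double_sum_identity_general (m k : ℕ) :
    ∑ i ∈ Finset.range m, ∑ j ∈ Finset.range (i + 1),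
        (i.choose j : ℚ) * ((k : ℚ) - j) * ((2 : ℚ) ^ k / 2 ^ (j + 1)) =
      (2 : ℚ) ^ k * (3 / 2) ^ m * ((k : ℚ) + 1 - m / 3) - 2 ^ k * ((k : ℚ) + 1) := by
  let F : ℕ → ℚ := fun i => 2 ^ k * (3 / 2) ^ i * ((k : ℚ) + 1 - i / 3)
  have forward_difference (i : ℕ) :
      F (i + 1) - F i = 2 ^ k / 2 * (3 / 2) ^ i * ((k : ℚ) - i / 3) := by
    simp only [F]
    push_cast
    ring
  simp only [sum_range_choose_mul_sub_mul_pow_div, ← forward_difference, sum_range_sub]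
  simp [F]

/-- `∑_{i=0}^{m−1} ∑_{j=0}^{i} C(i,j)·(k−j)·2^{k−j−1}
  = 2^k·(3/2)^m·(k + 1 − m/3) − 2^k·(k+1)` (over the rationals). -/
theorem double_sum_identity (m k : ℕ) (hk : 1 ≤ k) :
    ∑ i ∈ Finset.range m, ∑ j ∈ Finset.range (i + 1),
        (i.choose j : ℚ) * ((k : ℚ) - j) * ((2 : ℚ) ^ k / 2 ^ (j + 1)) =
      (2 : ℚ) ^ k * (3 / 2) ^ m * ((k : ℚ) + 1 - m / 3) - 2 ^ k * ((k : ℚ) + 1) :=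
  double_sum_identity_general m k
end

section
/- Define SD(n,k) by SD(n,n)=0, SD(n,0)=0, and SD(n,k) = 2^{k−1}k − 2^k + 1 + SD(n−1,k) + SD(n−1,k−1) for 0 < k < n. Let S(n,k) = ∑_{j=0}^{k} C(n−k+j, j)·2^{k−j}. Then SD(n,k) = C(n,k)·(n+1)/2 − S(n,k)·(n−2k+1)/2 − 2^k(k−1) − 1. -/
/-- `S(n,k) = ∑_{j=0}^{k} C(n−k+j, j)·2^{k−j}`. -/
def S (n k : ℕ) : ℕ := ∑ j ∈ Finset.range (k + 1), (n - k + j).choose j * 2 ^ (k - j)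

/-!
For `k ≤ n`, `S(n,k)` is the partial row sum `∑_{i ≤ k} C(n+1, i)` of Pascal's triangle: both
sides satisfy `x(k+1) = 2·x(k) + C(n+1, k+1)` along a diagonal `n - k = const`. Partial row sums
obey Pascal's rule, so the right-hand side of the closed form satisfies the same recurrence and
boundary values as `SD`, and the theorem follows by induction on `n`.
-/

open Finset

def binomPartialSum (N k : ℕ) : ℕ := ∑ i ∈ range (k + 1), N.choose i

lemma binomPartialSum_zero_right (N : ℕ) : binomPartialSum N 0 = 1 := by
  simp [binomPartialSum]

lemma binomPartialSum_succ_right (N k : ℕ) :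
    binomPartialSum N (k + 1) = binomPartialSum N k + N.choose (k + 1) :=
  sum_range_succ _ _

lemma binomPartialSum_succ_succ (N k : ℕ) :
    binomPartialSum (N + 1) (k + 1) = binomPartialSum N (k + 1) + binomPartialSum N k := by
  simp only [binomPartialSum, sum_range_succ' (fun i : ℕ => (N + 1).choose i),
    Nat.choose_succ_succ', sum_add_distrib, sum_range_succ' (fun i : ℕ => N.choose i) (k + 1)]
  simp only [Nat.choose_zero_right]
  ring

lemma binomPartialSum_self_add_one (N : ℕ) : binomPartialSum (N + 1) N + 1 = 2 ^ (N + 1) := by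
  rw [← Nat.sum_range_choose, sum_range_succ, Nat.choose_self, binomPartialSum]

lemma sum_choose_add_mul_two_pow (m k : ℕ) :
    ∑ j ∈ range (k + 1), (m + j).choose j * 2 ^ (k - j) = binomPartialSum (m + k + 1) k := by
  induction k with
  | zero => simp [binomPartialSum]
  | succ k ih =>
    have hdouble : ∑ j ∈ range (k + 1), (m + j).choose j * 2 ^ (k + 1 - j)
        = 2 * ∑ j ∈ range (k + 1), (m + j).choose j * 2 ^ (k - j) := by
      rw [mul_sum]
      refine sum_congr rfl fun j hj => ?_
      rw [Nat.sub_add_comm (Nat.lt_succ_iff.mp (mem_range.mp hj)), pow_succ]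
      ring
    rw [sum_range_succ, hdouble, ih, Nat.sub_self, pow_zero, mul_one,
      show m + (k + 1) + 1 = m + k + 1 + 1 by ring, binomPartialSum_succ_succ,
      binomPartialSum_succ_right, show m + (k + 1) = m + k + 1 by ring]
    ring

lemma S_eq_binomPartialSum {n k : ℕ} (hk : k ≤ n) : S n k = binomPartialSum (n + 1) k := by
  rw [S, sum_choose_add_mul_two_pow, Nat.sub_add_cancel hk]

def sdClosedForm (n k : ℕ) : ℚ :=
  (n.choose k : ℚ) * ((n : ℚ) + 1) / 2
    - (binomPartialSum (n + 1) k : ℚ) * ((n : ℚ) - 2 * k + 1) / 2 - 2 ^ k * ((k : ℚ) - 1) - 1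

lemma sdClosedForm_zero_right (n : ℕ) : sdClosedForm n 0 = 0 := by
  simp only [sdClosedForm, binomPartialSum_zero_right, Nat.choose_zero_right]
  push_cast
  ring

lemma sdClosedForm_self (n : ℕ) : sdClosedForm n n = 0 := by
  have hsum : (binomPartialSum (n + 1) n : ℚ) = 2 ^ (n + 1) - 1 := by
    rw [eq_sub_iff_add_eq]
    exact_mod_cast binomPartialSum_self_add_one n
  rw [sdClosedForm, hsum, Nat.choose_self]
  push_cast
  ring

lemma sdClosedForm_succ_succ (m j : ℕ) :
    sdClosedForm (m + 1) (j + 1)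
      = 2 ^ j * (j + 1) - 2 ^ (j + 1) + 1 + sdClosedForm m (j + 1) + sdClosedForm m j := by
  simp only [sdClosedForm, binomPartialSum_succ_succ (m + 1), binomPartialSum_succ_right,
    Nat.choose_succ_succ' m]
  push_cast
  ring

/-- Closed form for the size difference between the pairwise selection network
and the improved one: if `SD` satisfies the defining recurrence, then
`SD(n,k) = C(n,k)·(n+1)/2 − S(n,k)·(n−2k+1)/2 − 2^k(k−1) − 1`. -/
theorem SD_closed_form (SD : ℕ → ℕ → ℤ)
    (hdiag : ∀ n, SD n n = 0) (hzero : ∀ n, SD n 0 = 0)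
    (hrec : ∀ n k, 0 < k → k < n →
      SD n k = 2 ^ (k - 1) * k - 2 ^ k + 1 + SD (n - 1) k + SD (n - 1) (k - 1)) :
    ∀ n k, k ≤ n →
      (SD n k : ℚ) = (n.choose k : ℚ) * ((n : ℚ) + 1) / 2
        - (S n k : ℚ) * ((n : ℚ) - 2 * k + 1) / 2 - 2 ^ k * ((k : ℚ) - 1) - 1 := by
  intro n k hk
  rw [S_eq_binomPartialSum hk, ← sdClosedForm]
  induction n generalizing k with
  | zero => rw [Nat.le_zero.mp hk, hzero, sdClosedForm_zero_right, Int.cast_zero]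
  | succ m ih =>
    rcases k with _ | j
    · rw [hzero, sdClosedForm_zero_right, Int.cast_zero]
    rcases hk.eq_or_lt with hjm | hjm
    · obtain rfl : j = m := by omega
      rw [hdiag, sdClosedForm_self, Int.cast_zero]
    rw [hrec (m + 1) (j + 1) j.succ_pos hjm, sdClosedForm_succ_succ, ← ih (j + 1) (by omega),
      ← ih j (by omega), Nat.add_sub_cancel]
    push_cast
    ring
end

section
/- With SD defined by SD(n,n)=0, SD(n,0)=0, SD(n,k) = 2^{k−1}k − 2^k + 1 + SD(n−1,k) + SD(n−1,k−1) for 0 < k < n, one has SD(n, n−1) = 2^n·(n−4)/2 + n + 2 for all n ≥ 2. -/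
/-- Size difference at `k = n − 1` (i.e. selecting `N/2` out of `N = 2^n`):
if `SD` satisfies the defining recurrence, then
`SD(n, n−1) = 2^n(n−4)/2 + n + 2` for `n ≥ 2`. -/
theorem SD_half (SD : ℕ → ℕ → ℤ)
    (hdiag : ∀ n, SD n n = 0) (hzero : ∀ n, SD n 0 = 0)
    (hrec : ∀ n k, 0 < k → k < n →
      SD n k = 2 ^ (k - 1) * k - 2 ^ k + 1 + SD (n - 1) k + SD (n - 1) (k - 1)) :
    ∀ n, 2 ≤ n →
      (SD n (n - 1) : ℚ) = 2 ^ n * ((n : ℚ) - 4) / 2 + (n : ℚ) + 2 := by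
  intro n hn
  obtain ⟨m, rfl⟩ : ∃ m, n = m + 2 := ⟨n - 2, by omega⟩
  clear hn
  induction m with
  | zero =>
    have h := hrec 2 1 (by norm_num) (by norm_num)
    simp only [show (2:ℕ) - 1 = 1 from rfl, show (1:ℕ) - 1 = 0 from rfl,
      hdiag, hzero] at h
    norm_num [h]
  | succ m ih =>
    have h := hrec (m + 3) (m + 2) (by omega) (by omega)
    simp only [show m + 3 - 1 = m + 2 from rfl, show m + 2 - 1 = m + 1 from rfl,
      hdiag] at h
    have h' : (SD (m + 3) (m + 2) : ℚ)
        = 2 ^ (m + 1) * (m + 2) - 2 ^ (m + 2) + 1 + 0 + SD (m + 2) (m + 1) := by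
      exact_mod_cast congrArg (fun z : ℤ => (z : ℚ)) h
    simp only [show m + 1 + 2 = m + 3 from rfl, show m + 1 + 2 - 1 = m + 2 from rfl] at *
    simp only [show m + 2 - 1 = m + 1 from rfl] at ih
    rw [h', ih]
    push_cast
    ring
end

section
/- In the half encoding of a comparator, hcomp(a,b,c,d) = (a → c) ∧ (b → c) ∧ (a ∧ b → d): if a single comparator receives exactly one input set to true (the other undefined), unit propagation sets the max output c to true and leaves d undefined; consequently, in any selection network with half-encoded comparators where k−1 inputs are set to true, unit propagation sets the outputs y_1,...,y_{k−1} to true. -/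
/-- Three-valued values for unit propagation: `some true` = 1 (true),
`none` = X (undefined). The max-output of a half-encoded comparator is set to
true by unit propagation iff one of the inputs is true. -/
def upMax (a b : Option Bool) : Option Bool :=
  if a = some true ∨ b = some true then some true else none

/-- The min-output of a half-encoded comparator is set to true by unit
propagation iff both inputs are true. -/
def upMin (a b : Option Bool) : Option Bool :=
  if a = some true ∧ b = some true then some true else none

/-- Apply one comparator on channels `p = (i, j)` (with `i < j`), using `mx`
for the upper and `mn` for the lower output. -/
def applyCmp {α : Type} (mx mn : α → α → α) (p : ℕ × ℕ) (v : ℕ → α) : ℕ → α :=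
  fun t => if t = p.1 then mx (v p.1) (v p.2)
    else if t = p.2 then mn (v p.1) (v p.2) else v t

/-- Run a comparator network given as a list of channel pairs. -/
def run {α : Type} (mx mn : α → α → α) (cs : List (ℕ × ℕ)) (v : ℕ → α) : ℕ → α :=
  cs.foldl (fun w p => applyCmp mx mn p w) v

/-- `cs` is a selection network of order `n` selecting `k` elements: every
comparator is within range, and on every input the first `k` outputs are the
`k` largest elements in nonincreasing order. -/
def IsSelectionNetwork (n k : ℕ) (cs : List (ℕ × ℕ)) : Prop :=
  (∀ p ∈ cs, p.1 < p.2 ∧ p.2 < n) ∧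
  ∀ x : ℕ → ℕ,
    (∀ p q, p ≤ q → q < k → run max min cs x q ≤ run max min cs x p) ∧
    (∀ p q, p < k → k ≤ q → q < n → run max min cs x q ≤ run max min cs x p)

/-! Encode the three-valued output of unit propagation as the 0/1 indicator of "set to true".
This encoding turns `upMax`/`upMin` into `max`/`min`, so the propagated network is the ordinary
network run on a 0/1 input with `k - 1` ones. Comparators preserve the number of ones, and a
selection network places no output after position `i < k` above output `i`; if output `i` were
`0`, all ones would sit among the first `i < k - 1` positions. -/

section ComparatorNetwork

variable {α β : Type}

lemma applyCmp_map (f : α → β) {mx mn : α → α → α} {mx' mn' : β → β → β}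
    (hmx : ∀ a b, f (mx a b) = mx' (f a) (f b)) (hmn : ∀ a b, f (mn a b) = mn' (f a) (f b))
    (p : ℕ × ℕ) (v : ℕ → α) :
    f ∘ applyCmp mx mn p v = applyCmp mx' mn' p (f ∘ v) := by
  funext t
  simp only [Function.comp, applyCmp]
  split_ifs <;> simp [hmx, hmn]

lemma run_map (f : α → β) {mx mn : α → α → α} {mx' mn' : β → β → β}
    (hmx : ∀ a b, f (mx a b) = mx' (f a) (f b)) (hmn : ∀ a b, f (mn a b) = mn' (f a) (f b))
    (cs : List (ℕ × ℕ)) (v : ℕ → α) :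
    f ∘ run mx mn cs v = run mx' mn' cs (f ∘ v) := by
  induction cs generalizing v with
  | nil => rfl
  | cons p cs ih => exact (ih _).trans (congrArg _ (applyCmp_map f hmx hmn p v))

lemma run_max_min_le {M : Type} [LinearOrder M] {c : M} (cs : List (ℕ × ℕ)) {w : ℕ → M}
    (hw : ∀ t, w t ≤ c) (t : ℕ) : run max min cs w t ≤ c := by
  induction cs generalizing w with
  | nil => exact hw t
  | cons p cs ih =>
    refine ih fun s => ?_
    simp only [applyCmp]
    split_ifs
    · exact max_le (hw _) (hw _)
    · exact min_le_of_left_le (hw _)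
    · exact hw s

lemma sum_range_applyCmp_max_min {M : Type} [AddCommMonoid M] [LinearOrder M] {n : ℕ}
    {p : ℕ × ℕ} (hp : p.1 < p.2) (hpn : p.2 < n) (w : ℕ → M) :
    ∑ t ∈ Finset.range n, applyCmp max min p w t = ∑ t ∈ Finset.range n, w t := by
  have hne : p.1 ≠ p.2 := hp.ne
  have hsub : {p.1, p.2} ⊆ Finset.range n := by
    simp only [Finset.insert_subset_iff, Finset.singleton_subset_iff, Finset.mem_range]
    omega
  rw [← Finset.sum_sdiff hsub, ← Finset.sum_sdiff hsub (f := w), Finset.sum_pair hne,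
    Finset.sum_pair hne]
  congr 1
  · refine Finset.sum_congr rfl fun t ht => ?_
    simp only [Finset.mem_sdiff, Finset.mem_insert, Finset.mem_singleton, not_or] at ht
    simp [applyCmp, ht.2.1, ht.2.2]
  · simp [applyCmp, hne.symm, max_add_min]

lemma sum_range_run_max_min {M : Type} [AddCommMonoid M] [LinearOrder M] {n : ℕ}
    {cs : List (ℕ × ℕ)} (hcs : ∀ p ∈ cs, p.1 < p.2 ∧ p.2 < n) (w : ℕ → M) :
    ∑ t ∈ Finset.range n, run max min cs w t = ∑ t ∈ Finset.range n, w t := by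
  induction cs generalizing w with
  | nil => rfl
  | cons p cs ih =>
    obtain ⟨hp, hpn⟩ := hcs p List.mem_cons_self
    exact (ih (fun q hq => hcs q (List.mem_cons_of_mem _ hq)) _).trans
      (sum_range_applyCmp_max_min hp hpn w)

end ComparatorNetwork

lemma IsSelectionNetwork.run_le_run {n k : ℕ} {cs : List (ℕ × ℕ)}
    (hsel : IsSelectionNetwork n k cs) (x : ℕ → ℕ) {i t : ℕ} (hik : i < k) (hit : i ≤ t)
    (htn : t < n) : run max min cs x t ≤ run max min cs x i := by
  rcases lt_or_ge t k with htk | hkt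
  · exact (hsel.2 x).1 i t hit htk
  · exact (hsel.2 x).2 i t hik hkt htn

lemma eq_one_of_lt_sum_range {n i : ℕ} {y : ℕ → ℕ} (hy : ∀ t, y t ≤ 1)
    (hdom : ∀ t, i ≤ t → t < n → y t ≤ y i) (hin : i ≤ n)
    (hsum : i < ∑ t ∈ Finset.range n, y t) : y i = 1 := by
  by_contra hyi
  have hzero : ∀ t ∈ Finset.Ico i n, y t = 0 := fun t ht => by
    obtain ⟨hit, htn⟩ := Finset.mem_Ico.mp ht
    have := hdom t hit htn
    have := hy i
    omega
  have hhead : ∑ t ∈ Finset.range i, y t ≤ i := by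
    simpa using Finset.sum_le_sum fun t (_ : t ∈ Finset.range i) => hy t
  rw [← Finset.sum_range_add_sum_Ico _ hin, Finset.sum_eq_zero hzero] at hsum
  omega

def trueIndicator (a : Option Bool) : ℕ := if a = some true then 1 else 0

lemma trueIndicator_le_one (a : Option Bool) : trueIndicator a ≤ 1 := by
  unfold trueIndicator
  split_ifs <;> simp

lemma trueIndicator_eq_one_iff {a : Option Bool} : trueIndicator a = 1 ↔ a = some true := by
  unfold trueIndicator
  split_ifs with h <;> simp [h]

lemma trueIndicator_upMax (a b : Option Bool) :
    trueIndicator (upMax a b) = max (trueIndicator a) (trueIndicator b) := by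
  unfold trueIndicator upMax
  by_cases ha : a = some true <;> by_cases hb : b = some true <;> simp [ha, hb]

lemma trueIndicator_upMin (a b : Option Bool) :
    trueIndicator (upMin a b) = min (trueIndicator a) (trueIndicator b) := by
  unfold trueIndicator upMin
  by_cases ha : a = some true <;> by_cases hb : b = some true <;> simp [ha, hb]

lemma sum_range_trueIndicator (n : ℕ) (v : ℕ → Option Bool) :
    ∑ t ∈ Finset.range n, trueIndicator (v t) =
      ((Finset.range n).filter (fun i => v i = some true)).card := by
  rw [Finset.card_filter]
  rfl

theorem up_forward_propagation_general (n k : ℕ) (hkn : k ≤ n)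
    (cs : List (ℕ × ℕ)) (hsel : IsSelectionNetwork n k cs)
    (v : ℕ → Option Bool)
    (hcard : ((Finset.range n).filter (fun i => v i = some true)).card = k - 1) :
    (upMax (some true) none = some true ∧ upMin (some true) none = none) ∧
      ∀ i, i < k - 1 → run upMax upMin cs v i = some true := by
  refine ⟨⟨by simp [upMax], by simp [upMin]⟩, fun i hi => ?_⟩
  set y := run max min cs (trueIndicator ∘ v)
  have hy : trueIndicator ∘ run upMax upMin cs v = y :=
    run_map trueIndicator trueIndicator_upMax trueIndicator_upMin cs v
  have hsum : ∑ t ∈ Finset.range n, y t = k - 1 := by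
    rw [sum_range_run_max_min hsel.1, ← hcard]
    exact sum_range_trueIndicator n v
  have hyi : y i = 1 :=
    eq_one_of_lt_sum_range (run_max_min_le cs fun t => trueIndicator_le_one (v t))
      (fun t hit htn => hsel.run_le_run _ (by omega) hit htn) (by omega) (by omega)
  exact trueIndicator_eq_one_iff.mp (by rw [← hyi, ← hy]; rfl)

/-- Half encoding and unit propagation: a comparator receiving one true input
and one undefined input propagates true to the max output and leaves the min
output undefined; consequently, in any selection network whose comparators are
half-encoded, if `k − 1` inputs are set to true and the rest are undefined,
unit propagation sets the outputs `y_1, …, y_{k−1}` (indices `0, …, k−2`) to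
true. -/
theorem up_forward_propagation (n k : ℕ) (hk : 1 ≤ k) (hkn : k ≤ n)
    (cs : List (ℕ × ℕ)) (hsel : IsSelectionNetwork n k cs)
    (v : ℕ → Option Bool)
    (hv : ∀ i, i < n → v i = some true ∨ v i = none)
    (hcard : ((Finset.range n).filter (fun i => v i = some true)).card = k - 1) :
    (upMax (some true) none = some true ∧ upMin (some true) none = none) ∧
      ∀ i, i < k - 1 → run upMax upMin cs v i = some true :=
  up_forward_propagation_general n k hkn cs hsel v hcard
end
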